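/- arXiv:2210.10577 — 2 statements merged into one kernel-verified Lean document; each statement's English description precedes it below -/
import Mathlib

section
/- Let q_n denote the n-th term of the Fibonacci quilt sequence. Then q_{n+1} = q_n + q_{n−4} for all n ≥ 6, and q_{n+1} = q_{n−1} + q_{n−2} for all n ≥ 5. -/
/-- Indices `i` and `j` are adjacent in the log cabin quilt pattern. -/
def QuiltAdj (i j : ℕ) : Prop :=
  ((i : ℤ) - (j : ℤ)).natAbs ∈ ({1, 3, 4} : Set ℕ) ∨ ({i, j} : Set ℕ) = {1, 3}

/-- `q` is the Fibonacci quilt sequence (indexed from `1`; `q 0` unconstrained). -/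
def IsQuiltSeq (q : ℕ → ℕ) : Prop :=
  ∀ n, 1 ≤ n → IsLeast {m | 0 < m ∧
    ¬ ∃ L : Finset ℕ, L ⊆ Finset.Icc 1 (n - 1) ∧
      (∀ i ∈ L, ∀ j ∈ L, ¬ QuiltAdj i j) ∧
      m = ∑ ℓ ∈ L, q ℓ} (q n)

/-!
Call `v` representable in `[1, m]` (`QuiltRep q m v`) if it is a sum of terms `q ℓ` over pairwise
non-adjacent indices `ℓ ≤ m`. If such a set contains `m`, its other elements are `m - 2` or at most
`m - 5`, and if it also contains `m - 2`, the rest is at most `m - 7`; this describes the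
representable numbers recursively. By strong induction on `m`, all representable numbers in
`[1, m]` are below `q (m + 3)`. That bound shows that `q n + q (n - 4)` is not representable in
`[1, n]`, while every smaller number is (as `q n` plus a representation of the remainder, which is
below `q (n - 4)`), so `q (n + 1) = q n + q (n - 4)`. Together with the initial values
`1, 2, 3, 4, 5, 7` this gives `q (n + 1) = q (n - 1) + q (n - 2)`, and both recurrences feed the
next step of the induction.
-/

theorem quiltAdj_iff {i j : ℕ} : QuiltAdj i j ↔ i + 1 = j ∨ j + 1 = i ∨ i + 3 = j ∨ j + 3 = i ∨
    i + 4 = j ∨ j + 4 = i ∨ (i = 1 ∧ j = 3) ∨ (i = 3 ∧ j = 1) := by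
  simp only [QuiltAdj, Set.mem_insert_iff, Set.mem_singleton_iff, Set.pair_eq_pair_iff]
  omega

theorem QuiltAdj.symm {i j : ℕ} (h : QuiltAdj i j) : QuiltAdj j i := by
  rw [quiltAdj_iff] at h ⊢
  omega

theorem not_quiltAdj_self (i : ℕ) : ¬ QuiltAdj i i := by
  rw [quiltAdj_iff]
  omega

def IsQuiltIndep (L : Finset ℕ) : Prop :=
  ∀ i ∈ L, ∀ j ∈ L, ¬ QuiltAdj i j

theorem IsQuiltIndep.mono {L L' : Finset ℕ} (hL : IsQuiltIndep L) (h : L' ⊆ L) :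
    IsQuiltIndep L' :=
  fun i hi j hj => hL i (h hi) j (h hj)

theorem IsQuiltIndep.insert {L : Finset ℕ} {a : ℕ} (hL : IsQuiltIndep L)
    (ha : ∀ j ∈ L, ¬ QuiltAdj a j) : IsQuiltIndep (insert a L) := by
  intro i hi j hj
  rw [Finset.mem_insert] at hi hj
  rcases hi with rfl | hi <;> rcases hj with rfl | hj
  exacts [not_quiltAdj_self _, ha _ hj, fun h => ha _ hi h.symm, hL _ hi _ hj]

def QuiltRep (q : ℕ → ℕ) (m v : ℕ) : Prop :=
  ∃ L ⊆ Finset.Icc 1 m, IsQuiltIndep L ∧ v = ∑ ℓ ∈ L, q ℓ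

variable {q : ℕ → ℕ} {m v : ℕ}

namespace QuiltRep

theorem zero (q : ℕ → ℕ) (m : ℕ) : QuiltRep q m 0 :=
  ⟨∅, Finset.empty_subset _, fun _ h => absurd h (Finset.notMem_empty _), rfl⟩

theorem mono {m' : ℕ} (h : m ≤ m') : QuiltRep q m v → QuiltRep q m' v
  | ⟨L, hL, hind, hv⟩ => ⟨L, hL.trans (Finset.Icc_subset_Icc_right h), hind, hv⟩

theorem self (hm : 1 ≤ m) : QuiltRep q m (q m) :=
  ⟨{m}, by simpa using hm, by simpa [IsQuiltIndep] using not_quiltAdj_self m, by simp⟩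

end QuiltRep

theorem quiltRep_zero_iff : QuiltRep q 0 v ↔ v = 0 := by
  refine ⟨fun ⟨L, hL, _, hv⟩ => ?_, fun h => h ▸ QuiltRep.zero q 0⟩
  have hL : L = ∅ := by simpa using hL
  rw [hv, hL, Finset.sum_empty]

theorem QuiltRep.add_top {r : ℕ} (hm : 1 ≤ m) (hr : QuiltRep q (m - 5) r) :
    QuiltRep q m (q m + r) := by
  obtain ⟨L, hL, hind, rfl⟩ := hr
  have hgap : ∀ j ∈ L, j + 5 ≤ m := fun j hj => by
    have := Finset.mem_Icc.1 (hL hj); omega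
  refine ⟨insert m L, ?_, hind.insert fun j hj => ?_, ?_⟩
  · exact Finset.insert_subset (by simpa using hm)
      (hL.trans (Finset.Icc_subset_Icc_right (by omega)))
  · have := hgap j hj
    rw [quiltAdj_iff]; omega
  · rw [Finset.sum_insert fun h => by have := hgap m h; omega]

theorem QuiltRep.add_top_two {s : ℕ} (hm : 4 ≤ m) (hs : QuiltRep q (m - 7) s) :
    QuiltRep q m (q m + q (m - 2) + s) := by
  obtain ⟨L, hL, hind, rfl⟩ := hs
  have hgap : ∀ j ∈ L, j + 7 ≤ m := fun j hj => by
    have := Finset.mem_Icc.1 (hL hj); omega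
  have hind' : IsQuiltIndep (insert (m - 2) L) := hind.insert fun j hj => by
    have := hgap j hj
    rw [quiltAdj_iff]; omega
  refine ⟨insert m (insert (m - 2) L), ?_, hind'.insert fun j hj => ?_, ?_⟩
  · refine Finset.insert_subset (by simp; omega) (Finset.insert_subset (by simp; omega) ?_)
    exact hL.trans (Finset.Icc_subset_Icc_right (by omega))
  · rcases Finset.mem_insert.1 hj with rfl | hj
    · rw [quiltAdj_iff]; omega
    · have := hgap j hj
      rw [quiltAdj_iff]; omega
  · rw [Finset.sum_insert fun h => ?_,
      Finset.sum_insert fun h => by have := hgap (m - 2) h; omega, add_assoc]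
    rcases Finset.mem_insert.1 h with h | h
    · omega
    · have := hgap m h; omega

theorem QuiltRep.cases (hv : QuiltRep q m v) :
    QuiltRep q (m - 1) v ∨ (∃ r, QuiltRep q (m - 5) r ∧ v = q m + r) ∨
      (4 ≤ m ∧ ∃ s, QuiltRep q (m - 7) s ∧ v = q m + q (m - 2) + s) := by
  obtain ⟨L, hL, hind, rfl⟩ := hv
  have hmem : ∀ j ∈ L, 1 ≤ j ∧ j ≤ m := fun j hj => Finset.mem_Icc.1 (hL hj)
  by_cases hmL : m ∈ L
  swap
  · refine .inl ⟨L, fun j hj => ?_, hind, rfl⟩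
    have := hmem j hj
    have : j ≠ m := fun h => hmL (h ▸ hj)
    simp only [Finset.mem_Icc]; omega
  have hrest : ∀ j ∈ L.erase m, 1 ≤ j ∧ (j + 2 = m ∧ 4 ≤ m ∨ j + 5 ≤ m) := fun j hj => by
    obtain ⟨hjm, hj⟩ := Finset.mem_erase.1 hj
    have := hmem j hj
    have := hind j hj m hmL
    rw [quiltAdj_iff] at this; omega
  rw [← Finset.add_sum_erase L q hmL]
  by_cases h2 : m - 2 ∈ L.erase m
  · have h4 : 4 ≤ m := by have := hrest _ h2; omega
    refine .inr (.inr ⟨h4, _, ⟨(L.erase m).erase (m - 2), fun j hj => ?_,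
      hind.mono ((Finset.erase_subset _ _).trans (Finset.erase_subset _ _)), rfl⟩, ?_⟩)
    · obtain ⟨hj2, hj⟩ := Finset.mem_erase.1 hj
      have := hrest j hj
      have := hind j (Finset.mem_of_mem_erase hj) (m - 2) (Finset.mem_of_mem_erase h2)
      rw [quiltAdj_iff] at this
      simp only [Finset.mem_Icc]; omega
    · rw [← Finset.add_sum_erase _ q h2, add_assoc]
  · refine .inr (.inl ⟨_, ⟨L.erase m, fun j hj => ?_, hind.mono (Finset.erase_subset _ _), rfl⟩,
      rfl⟩)
    have := hrest j hj
    have : j ≠ m - 2 := fun h => h2 (h ▸ hj)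
    simp only [Finset.mem_Icc]; omega

theorem quiltRep_iff (hm : 1 ≤ m) :
    QuiltRep q m v ↔ QuiltRep q (m - 1) v ∨ (∃ r, QuiltRep q (m - 5) r ∧ v = q m + r) ∨
      (4 ≤ m ∧ ∃ s, QuiltRep q (m - 7) s ∧ v = q m + q (m - 2) + s) := by
  refine ⟨QuiltRep.cases, ?_⟩
  rintro (h | ⟨r, hr, rfl⟩ | ⟨h4, s, hs, rfl⟩)
  exacts [h.mono (Nat.sub_le m 1), hr.add_top hm, hs.add_top_two h4]

namespace IsQuiltSeq

variable {k : ℕ}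

theorem pos (hq : IsQuiltSeq q) (hk : 1 ≤ k) : 0 < q k := (hq k hk).1.1

theorem not_quiltRep (hq : IsQuiltSeq q) (hk : 1 ≤ k) : ¬ QuiltRep q (k - 1) (q k) :=
  (hq k hk).1.2

theorem quiltRep_of_lt (hq : IsQuiltSeq q) (hk : 1 ≤ k) (hv : v < q k) :
    QuiltRep q (k - 1) v := by
  rcases Nat.eq_zero_or_pos v with rfl | hv0
  · exact QuiltRep.zero q _
  · by_contra h
    exact absurd ((hq k hk).2 ⟨hv0, h⟩) (not_le.2 hv)

theorem eq_of_forall_lt (hq : IsQuiltSeq q) (hk : 1 ≤ k) (hv : 0 < v)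
    (hnot : ¬ QuiltRep q (k - 1) v) (hall : ∀ w < v, QuiltRep q (k - 1) w) : q k = v :=
  (hq k hk).unique ⟨⟨hv, hnot⟩, fun w hw => not_lt.1 fun h => hw.2 (hall w h)⟩

theorem quiltRep_of_le (hq : IsQuiltSeq q) (hk : 1 ≤ k) (hv : v ≤ q k) : QuiltRep q k v := by
  rcases hv.lt_or_eq with hv | rfl
  · exact (hq.quiltRep_of_lt hk hv).mono (Nat.sub_le k 1)
  · exact QuiltRep.self hk

theorem strictMonoOn (hq : IsQuiltSeq q) : StrictMonoOn q (Set.Ici 1) :=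
  strictMonoOn_of_lt_add_one Set.ordConnected_Ici fun _ _ hk _ => not_le.1 fun h =>
    hq.not_quiltRep (Nat.le_succ_of_le hk) (hq.quiltRep_of_le hk h)

theorem not_quiltRep_of_lt (hq : IsQuiltSeq q) {j : ℕ} (hk : 1 ≤ k) (hjk : j < k) :
    ¬ QuiltRep q j (q k) :=
  fun h => hq.not_quiltRep hk (h.mono (by omega))

theorem initial_values (hq : IsQuiltSeq q) :
    q 1 = 1 ∧ q 2 = 2 ∧ q 3 = 3 ∧ q 4 = 4 ∧ q 5 = 5 ∧ q 6 = 7 := by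
  have h1 : q 1 = 1 := hq.eq_of_forall_lt le_rfl one_pos (by simp [quiltRep_zero_iff])
    (fun w hw => by simp [quiltRep_zero_iff]; omega)
  have h2 : q 2 = 2 := hq.eq_of_forall_lt (by norm_num) two_pos
    (by simp [quiltRep_iff, quiltRep_zero_iff, h1])
    (fun w hw => by simp [quiltRep_iff, quiltRep_zero_iff, h1]; omega)
  have h3 : q 3 = 3 := hq.eq_of_forall_lt (by norm_num) (by norm_num)
    (by simp [quiltRep_iff, quiltRep_zero_iff, h1, h2])
    (fun w hw => by simp [quiltRep_iff, quiltRep_zero_iff, h1, h2]; omega)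
  have h4 : q 4 = 4 := hq.eq_of_forall_lt (by norm_num) (by norm_num)
    (by simp [quiltRep_iff, quiltRep_zero_iff, h1, h2, h3])
    (fun w hw => by simp [quiltRep_iff, quiltRep_zero_iff, h1, h2, h3]; omega)
  have h5 : q 5 = 5 := hq.eq_of_forall_lt (by norm_num) (by norm_num)
    (by simp [quiltRep_iff, quiltRep_zero_iff, h1, h2, h3, h4])
    (fun w hw => by simp [quiltRep_iff, quiltRep_zero_iff, h1, h2, h3, h4]; omega)
  have h6 : q 6 = 7 := hq.eq_of_forall_lt (by norm_num) (by norm_num)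
    (by simp [quiltRep_iff, quiltRep_zero_iff, h1, h2, h3, h4, h5])
    (fun w hw => by simp [quiltRep_iff, quiltRep_zero_iff, h1, h2, h3, h4, h5]; omega)
  exact ⟨h1, h2, h3, h4, h5, h6⟩

theorem lt_of_quiltRep_of_le_three (hq : IsQuiltSeq q) (hm : m ≤ 3)
    (hv : QuiltRep q m v) : v < q (m + 3) := by
  obtain ⟨h1, h2, h3, h4, h5, h6⟩ := hq.initial_values
  interval_cases m <;> simp [quiltRep_iff, quiltRep_zero_iff, h1, h2, h3] at hv <;>
    simp only [h3, h4, h5, h6] <;> omega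

theorem lt_of_quiltRep_of_recurrence (hq : IsQuiltSeq q)
    (hB₁ : ∀ v, QuiltRep q (k + 3) v → v < q (k + 6))
    (hB₂ : ∀ v, QuiltRep q (k + 2) v → v < q (k + 5))
    (hB₄ : ∀ v, QuiltRep q k v → v < q (k + 3))
    (hR₄ : q (k + 5) = q (k + 3) + q (k + 2)) (hR₆ : q (k + 7) = q (k + 5) + q (k + 4))
    (hv : QuiltRep q (k + 4) v) : v < q (k + 7) := by
  rcases hv.cases with hv | ⟨r, hr, rfl⟩ | ⟨-, s, hs, rfl⟩ <;>
    simp only [Nat.add_one_sub_one, Nat.reduceSubDiff] at *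
  · have := hB₁ v hv
    have := hq.strictMonoOn (a := k + 6) (b := k + 7) (by simp) (by simp) (by omega)
    omega
  · have := hB₂ r (hr.mono (by omega))
    omega
  · have := hB₄ s (hs.mono (by omega))
    omega

theorem not_quiltRep_add (hq : IsQuiltSeq q) (hB : ∀ v, QuiltRep q (k + 3) v → v < q (k + 6))
    (hR₅ : q (k + 6) = q (k + 4) + q (k + 3)) (hR₄ : q (k + 5) = q (k + 3) + q (k + 2)) :
    ¬ QuiltRep q (k + 6) (q (k + 6) + q (k + 2)) := by
  intro h
  rcases h.cases with h | ⟨r, hr, hr'⟩ | ⟨-, s, hs, hs'⟩ <;>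
    simp only [Nat.add_one_sub_one, Nat.reduceSubDiff] at *
  · rcases h.cases with h | ⟨r, hr, hr'⟩ | ⟨-, s, hs, hs'⟩ <;>
      simp only [Nat.add_one_sub_one, Nat.reduceSubDiff] at *
    · rcases h.cases with h | ⟨r, hr, hr'⟩ | ⟨-, s, hs, hs'⟩ <;>
        simp only [Nat.add_one_sub_one, Nat.reduceSubDiff] at *
      · have := hB _ h
        omega
      · obtain rfl : r = q (k + 5) := by omega
        exact hq.not_quiltRep_of_lt (by omega) (by omega) hr
      · obtain rfl : s = q (k + 3) := by omega
        exact hq.not_quiltRep_of_lt (by omega) (by omega) hs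
    · obtain rfl : r = q (k + 4) := by omega
      exact hq.not_quiltRep_of_lt (by omega) (by omega) hr
    · -- adding `k + 3` to the witness for `s` would represent `q (k + 4)` within `[1, k + 3]`
      refine hq.not_quiltRep (k := k + 4) (by omega) ?_
      have := QuiltRep.add_top (m := k + 3) (by omega) (by simpa using hs)
      rwa [show q (k + 3) + s = q (k + 4) by omega] at this
  · obtain rfl : r = q (k + 2) := by omega
    exact hq.not_quiltRep_of_lt (by omega) (by omega) hr
  · have := hq.strictMonoOn (a := k + 2) (b := k + 4) (by simp) (by simp) (by omega)
    omega

theorem quiltRep_of_lt_add (hq : IsQuiltSeq q) {w : ℕ} (hw : w < q (k + 6) + q (k + 2)) :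
    QuiltRep q (k + 6) w := by
  rcases le_or_gt w (q (k + 6)) with hw' | hw'
  · exact hq.quiltRep_of_le (by omega) hw'
  · have hr := hq.quiltRep_of_lt (k := k + 2) (v := w - q (k + 6)) (by omega) (by omega)
    have := hr.add_top (m := k + 6) (by omega)
    rwa [Nat.add_sub_cancel' hw'.le] at this

theorem recurrence_of_bound (hq : IsQuiltSeq q)
    (hB : ∀ v, QuiltRep q (k + 3) v → v < q (k + 6))
    (hR₅ : q (k + 6) = q (k + 4) + q (k + 3)) (hR₄ : q (k + 5) = q (k + 3) + q (k + 2)) :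
    q (k + 7) = q (k + 6) + q (k + 2) :=
  hq.eq_of_forall_lt (by omega) (Nat.add_pos_right _ (hq.pos (by omega)))
    (hq.not_quiltRep_add hB hR₅ hR₄) fun _ hw => hq.quiltRep_of_lt_add hw

theorem bound_and_recurrence (hq : IsQuiltSeq q) (m : ℕ) :
    (∀ v, QuiltRep q m v → v < q (m + 3)) ∧ (2 ≤ m → q (m + 3) = q (m + 1) + q m) := by
  induction m using Nat.strong_induction_on with
  | _ m ih =>
  obtain hm | ⟨k, rfl⟩ : m ≤ 3 ∨ ∃ k, m = k + 4 :=
    (le_or_gt m 3).imp_right fun h => ⟨m - 4, by omega⟩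
  · obtain ⟨-, h2, h3, h4, h5, h6⟩ := hq.initial_values
    refine ⟨fun v => hq.lt_of_quiltRep_of_le_three hm, fun hm₂ => ?_⟩
    interval_cases m <;> simp only [h2, h3, h4, h5, h6]
  · obtain ⟨hB₁, hR₅⟩ := ih (k + 3) (by omega)
    obtain ⟨hB₂, hR₄⟩ := ih (k + 2) (by omega)
    have hR₅ : q (k + 6) = q (k + 4) + q (k + 3) := hR₅ (by omega)
    have hR₄ : q (k + 5) = q (k + 3) + q (k + 2) := hR₄ (by omega)
    have hR₆ : q (k + 7) = q (k + 5) + q (k + 4) := by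
      have := hq.recurrence_of_bound hB₁ hR₅ hR₄
      omega
    exact ⟨fun v => hq.lt_of_quiltRep_of_recurrence hB₁ hB₂ (ih k (by omega)).1 hR₄ hR₆,
      fun _ => hR₆⟩

end IsQuiltSeq

theorem fibonacci_quilt_recurrences (q : ℕ → ℕ) (hq : IsQuiltSeq q) :
    (∀ n, 6 ≤ n → q (n + 1) = q n + q (n - 4)) ∧
    (∀ n, 5 ≤ n → q (n + 1) = q (n - 1) + q (n - 2)) := by
  refine ⟨fun n hn => ?_, fun n hn => ?_⟩
  · obtain ⟨k, rfl⟩ := Nat.exists_eq_add_of_le' hn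
    obtain ⟨hB, hR₅⟩ := hq.bound_and_recurrence (k + 3)
    have hR₄ := (hq.bound_and_recurrence (k + 2)).2 (by omega)
    exact hq.recurrence_of_bound hB (hR₅ (by omega)) hR₄
  · obtain ⟨k, rfl⟩ := Nat.exists_eq_add_of_le' hn
    simpa using (hq.bound_and_recurrence (k + 3)).2 (by omega)
end

section
/- Let T be a finite non-empty set of positive integers and let c = max T. Then there exists an integer K such that for all k ≥ K, the S-LID sequence (a_n)_{n≥1} for S = {1, ..., k} \ {k − t : t ∈ T} satisfies a_{n+1} = a_n + a_{n−k} for all integers n > k + c. -/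
/-- `L` is an `S`-legal index set: all pairwise index differences avoid `S`. -/
def SlidLegal (S : Set ℕ) (L : Finset ℕ) : Prop :=
  ∀ i ∈ L, ∀ j ∈ L, ((i : ℤ) - (j : ℤ)).natAbs ∉ S

/-- `m` has an `S`-LID decomposition using the terms `a 1, …, a n`. -/
def SlidDecomp (S : Set ℕ) (a : ℕ → ℕ) (n m : ℕ) : Prop :=
  ∃ L : Finset ℕ, L ⊆ Finset.Icc 1 n ∧ SlidLegal S L ∧ m = ∑ ℓ ∈ L, a ℓ

/-- `a` is the `S`-LID sequence (indexed from `1`; `a 0` is unconstrained):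
for each `n ≥ 1`, `a n` is the least positive integer with no `S`-LID
decomposition using `a 1, …, a (n-1)`. -/
def IsSlidSeq (S : Set ℕ) (a : ℕ → ℕ) : Prop :=
  ∀ n, 1 ≤ n → IsLeast {m | 0 < m ∧ ¬ SlidDecomp S a (n - 1) m} (a n)

/-!
Write `S` for the forbidden set. A nonzero difference avoids `S` iff it exceeds `k` or is a
fringe value `k - t ≥ k - c`, so distinct indices of a legal set are at least `k - c` apart.

For every `k < m < n` one has `a m + a (m - k) ≤ a n`: otherwise `a n - a m` would be a legal
sum of terms below `m - k`, and the index `m` could be added to it. With `m = n` this gives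
`a n + a (n - k) ≤ a (n + 1)`, so the recurrence at `n` says that `a n + a (n - k)` is not a
legal sum of `a 1, …, a n`. This is proved by strong induction on `n`.

On the initial window `a j = j` for `j ≤ k + 1 - c`, and counting legal sets (at most pairs)
gives `a j ≤ j + (3c + 1)²` for `j ≤ k + 2c + 2`. Together with the recurrence below `n` this
yields the growth `(c + 3) a q ≤ a (q + k - 2c)`, hence `2 a q ≤ a (q + k - c)`, and so a legal
sum supported in `[1, j]` is at most `2 a j`. Now let `m` be the top index of a putative
decomposition and `R` the rest, which lies below `m + c - k`. If `m = n`, `R` would decompose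
`a (n - k)` (the difference `k` is forbidden as `0 ∉ T`). If `m ≤ k`, `R` is at most one index
`≤ c`. Otherwise, with `e` the top index of `R`, one shows `∑ R < a (n - k) + a (m - k)`: when
`e + k ≤ n` because `a e ≤ a (n - k)` and the rest of `R` is negligible against `a (m - k)`;
when `e > n - k` by bounding the excess `a e - a (n - k)` with the linear, the counting or the
recurrence estimates, according to the size of `e` and `n`.
-/

open Finset

section SlidSeq

variable {S : Set ℕ} {a : ℕ → ℕ}

theorem SlidLegal.subset {L L' : Finset ℕ} (h : SlidLegal S L) (hs : L' ⊆ L) :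
    SlidLegal S L' :=
  fun i hi j hj => h i (hs hi) j (hs hj)

theorem SlidDecomp.mono {q r x : ℕ} (h : SlidDecomp S a q x) (hqr : q ≤ r) :
    SlidDecomp S a r x := by
  obtain ⟨L, hL, hleg, rfl⟩ := h
  exact ⟨L, hL.trans (Icc_subset_Icc_right hqr), hleg, rfl⟩

theorem SlidDecomp.apply (h0 : 0 ∉ S) {q : ℕ} (hq : 1 ≤ q) : SlidDecomp S a q (a q) :=
  ⟨{q}, by simpa using hq, by simpa [SlidLegal] using h0, by simp⟩

theorem SlidDecomp.add_apply {k q m x : ℕ} (hS : S ⊆ Set.Icc 1 k) (h : SlidDecomp S a q x)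
    (hm : q + k < m) : SlidDecomp S a m (a m + x) := by
  obtain ⟨L, hL, hleg, rfl⟩ := h
  have hmL : m ∉ L := fun hm' => by have := mem_Icc.1 (hL hm'); omega
  refine ⟨insert m L, insert_subset_iff.2 ⟨mem_Icc.2 ⟨by omega, le_rfl⟩,
    hL.trans (Icc_subset_Icc_right (by omega))⟩, fun i hi j hj hij => ?_, (sum_insert hmL).symm⟩
  have hk := hS hij
  simp only [Set.mem_Icc] at hk
  rcases mem_insert.1 hi with hi | hi <;> rcases mem_insert.1 hj with hj | hj
  · omega
  · have := mem_Icc.1 (hL hj); omega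
  · have := mem_Icc.1 (hL hi); omega
  · exact hleg i hi j hj hij

namespace IsSlidSeq

theorem pos (ha : IsSlidSeq S a) {n : ℕ} (hn : 1 ≤ n) : 0 < a n :=
  (ha n hn).1.1

theorem not_slidDecomp (ha : IsSlidSeq S a) {n : ℕ} (hn : 1 ≤ n) :
    ¬ SlidDecomp S a (n - 1) (a n) :=
  (ha n hn).1.2

theorem slidDecomp_of_lt (ha : IsSlidSeq S a) {n x : ℕ} (hn : 1 ≤ n) (hx : 0 < x)
    (hxa : x < a n) : SlidDecomp S a (n - 1) x :=
  by_contra fun h => (ha n hn).2 ⟨hx, h⟩ |>.not_gt hxa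

theorem apply_lt_apply_add_one (ha : IsSlidSeq S a) (h0 : 0 ∉ S) {n : ℕ} (hn : 1 ≤ n) :
    a n < a (n + 1) := by
  by_contra! hle
  refine ha.not_slidDecomp (n := n + 1) (by omega) ?_
  rcases hle.lt_or_eq with hlt | heq
  · exact (ha.slidDecomp_of_lt hn (ha.pos (by omega)) hlt).mono (by omega)
  · exact heq ▸ SlidDecomp.apply h0 hn

theorem strictMonoOn (ha : IsSlidSeq S a) (h0 : 0 ∉ S) : StrictMonoOn a (Set.Ici 1) :=
  strictMonoOn_of_lt_add_one Set.ordConnected_Ici fun _ _ hn _ =>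
    ha.apply_lt_apply_add_one h0 hn

theorem apply_lt_apply (ha : IsSlidSeq S a) (h0 : 0 ∉ S) {p q : ℕ} (hp : 1 ≤ p)
    (hpq : p < q) : a p < a q :=
  ha.strictMonoOn h0 hp (Set.mem_Ici.2 (by omega)) hpq

theorem apply_le_apply (ha : IsSlidSeq S a) (h0 : 0 ∉ S) {p q : ℕ} (hp : 1 ≤ p)
    (hpq : p ≤ q) : a p ≤ a q :=
  (ha.strictMonoOn h0).monotoneOn hp (Set.mem_Ici.2 (by omega)) hpq

theorem apply_add_le_apply_add (ha : IsSlidSeq S a) (h0 : 0 ∉ S) {p : ℕ} (hp : 1 ≤ p)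
    (r : ℕ) : a p + r ≤ a (p + r) := by
  induction r with
  | zero => rfl
  | succ r ih =>
    rw [← add_assoc p r 1]
    have := ha.apply_lt_apply_add_one h0 (n := p + r) (by omega)
    omega

theorem le_apply (ha : IsSlidSeq S a) (h0 : 0 ∉ S) {p : ℕ} (hp : 1 ≤ p) : p ≤ a p := by
  have h := ha.apply_add_le_apply_add h0 le_rfl (p - 1)
  rw [Nat.add_sub_cancel' hp] at h
  have := ha.pos le_rfl
  omega

theorem apply_add_apply_sub_le (ha : IsSlidSeq S a) {k : ℕ} (hS : S ⊆ Set.Icc 1 k)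
    {m n : ℕ} (hkm : k < m) (hmn : m < n) : a m + a (m - k) ≤ a n := by
  have h0 : 0 ∉ S := fun h => by simpa using (hS h).1
  by_contra! h
  have hlt := ha.apply_lt_apply h0 (by omega) hmn
  have hD := (ha.slidDecomp_of_lt (n := m - k) (x := a n - a m) (by omega) (by omega)
    (by omega)).add_apply hS (m := m) (by omega)
  rw [Nat.add_sub_cancel' hlt.le] at hD
  exact ha.not_slidDecomp (by omega) (hD.mono (by omega))

end IsSlidSeq

end SlidSeq

def fringeSet (T : Finset ℕ) (k : ℕ) : Set ℕ :=
  Set.Icc 1 k \ ((fun t => k - t) '' ↑T)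

theorem fringeSet_subset_Icc (T : Finset ℕ) (k : ℕ) : fringeSet T k ⊆ Set.Icc 1 k :=
  Set.sdiff_subset

theorem zero_notMem_fringeSet (T : Finset ℕ) (k : ℕ) : 0 ∉ fringeSet T k :=
  fun h => by simpa using (fringeSet_subset_Icc T k h).1

def RecurrenceBelow (a : ℕ → ℕ) (k c N : ℕ) : Prop :=
  ∀ j, k + c < j → j < N → a (j + 1) = a j + a (j - k)

structure FringeSlid (T : Finset ℕ) (c k : ℕ) (a : ℕ → ℕ) : Prop where
  pos : ∀ t ∈ T, 0 < t
  le : ∀ t ∈ T, t ≤ c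
  large : 100 * (c + 1) ^ 3 ≤ k
  slid : IsSlidSeq (fringeSet T k) a

namespace FringeSlid

variable {T : Finset ℕ} {c k : ℕ} {a : ℕ → ℕ}

theorem k_ge (X : FringeSlid T c k a) : 9 * c ^ 3 + 36 * c ^ 2 + 30 * c + 9 ≤ k := by
  have := X.large
  nlinarith [sq_nonneg c]

theorem apply_lt_apply (X : FringeSlid T c k a) {p q : ℕ} (hp : 1 ≤ p) (hpq : p < q) :
    a p < a q :=
  X.slid.apply_lt_apply (zero_notMem_fringeSet T k) hp hpq

theorem apply_le_apply (X : FringeSlid T c k a) {p q : ℕ} (hp : 1 ≤ p) (hpq : p ≤ q) :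
    a p ≤ a q :=
  X.slid.apply_le_apply (zero_notMem_fringeSet T k) hp hpq

theorem le_apply (X : FringeSlid T c k a) {p : ℕ} (hp : 1 ≤ p) : p ≤ a p :=
  X.slid.le_apply (zero_notMem_fringeSet T k) hp

theorem apply_add_apply_sub_le (X : FringeSlid T c k a) {m n : ℕ} (hkm : k < m)
    (hmn : m < n) : a m + a (m - k) ≤ a n :=
  X.slid.apply_add_apply_sub_le (fringeSet_subset_Icc T k) hkm hmn

theorem legal_cases (X : FringeSlid T c k a) {L : Finset ℕ}
    (hleg : SlidLegal (fringeSet T k) L) {i j : ℕ} (hi : i ∈ L) (hj : j ∈ L) (hij : i < j) :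
    i + k < j ∨ ∃ t ∈ T, i + k = j + t := by
  have hd := hleg j hj i hi
  rw [show ((j : ℤ) - i).natAbs = j - i by omega] at hd
  by_contra! h
  refine hd ⟨⟨by omega, by omega⟩, fun ⟨t, ht, hkt⟩ => h.2 t ht ?_⟩
  have := X.le t ht
  have := X.k_ge
  simp only at hkt
  omega

theorem legal_gap (X : FringeSlid T c k a) {L : Finset ℕ}
    (hleg : SlidLegal (fringeSet T k) L) {i j : ℕ} (hi : i ∈ L) (hj : j ∈ L) (hij : i < j) :
    i + k ≤ j + c := by
  rcases X.legal_cases hleg hi hj hij with h | ⟨t, ht, h⟩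
  · omega
  · have := X.le t ht
    omega

theorem exists_insert_eq (X : FringeSlid T c k a) {L : Finset ℕ}
    (hleg : SlidLegal (fringeSet T k) L) {q : ℕ} (hL : L ⊆ Icc 1 q) (hne : L.Nonempty) :
    ∃ m R, m ∈ Icc 1 q ∧ R ⊆ Icc 1 (m + c - k) ∧ L = insert m R ∧
      ∑ ℓ ∈ L, a ℓ = a m + ∑ ℓ ∈ R, a ℓ := by
  have hm := L.max'_mem hne
  refine ⟨L.max' hne, L.erase (L.max' hne), hL hm, fun x hx => ?_, (insert_erase hm).symm,
    (add_sum_erase L a hm).symm⟩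
  have hxL := mem_of_mem_erase hx
  have hx1 := mem_Icc.1 (hL hxL)
  have := X.legal_gap hleg hxL hm (lt_of_le_of_ne (L.le_max' x hxL) (ne_of_mem_erase hx))
  exact mem_Icc.2 ⟨hx1.1, by omega⟩

theorem legal_insert_cases (X : FringeSlid T c k a) {m x : ℕ} {R : Finset ℕ}
    (hleg : SlidLegal (fringeSet T k) (insert m R)) (hR : R ⊆ Icc 1 (m + c - k))
    (hx : x ∈ R) : x + k < m ∨ ∃ t ∈ T, x + k = m + t := by
  have := mem_Icc.1 (hR hx)
  have := X.k_ge
  exact X.legal_cases hleg (mem_insert_of_mem hx) (mem_insert_self m R) (by omega)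

theorem eq_empty_or_singleton (X : FringeSlid T c k a) {L : Finset ℕ}
    (hleg : SlidLegal (fringeSet T k) L) {q : ℕ} (hL : L ⊆ Icc 1 q) (hq : q + c ≤ k) :
    L = ∅ ∨ ∃ i, L = {i} := by
  have hcard : L.card ≤ 1 := card_le_one.2 fun i hi j hj => by
    have := mem_Icc.1 (hL hi)
    have := mem_Icc.1 (hL hj)
    rcases lt_trichotomy i j with h | h | h
    · have := X.legal_gap hleg hi hj h
      omega
    · exact h
    · have := X.legal_gap hleg hj hi h
      omega
  obtain ⟨i, hi⟩ := card_le_one_iff_subset_singleton.1 hcard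
  exact (subset_singleton_iff.1 hi).imp id fun h => ⟨i, h⟩

theorem apply_eq_self (X : FringeSlid T c k a) {j : ℕ} (hj : 1 ≤ j) (hjk : j + c ≤ k + 1) :
    a j = j := by
  induction j using Nat.strong_induction_on with
  | _ j IH =>
  refine (X.slid j hj).unique ⟨⟨hj, ?_⟩, fun x ⟨hx, hxD⟩ => ?_⟩
  · rintro ⟨L, hL, hleg, hsum⟩
    rcases X.eq_empty_or_singleton hleg hL (by omega) with rfl | ⟨i, rfl⟩
    · simp at hsum
      omega
    · have := mem_Icc.1 (hL (mem_singleton_self i))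
      rw [sum_singleton, IH i (by omega) (by omega) (by omega)] at hsum
      omega
  · by_contra! hxj
    have hD := (SlidDecomp.apply (a := a) (zero_notMem_fringeSet T k) hx).mono
      (show x ≤ j - 1 by omega)
    rw [IH x hxj hx (by omega)] at hD
    exact hxD hD

theorem sum_le_of_subset_Icc (X : FringeSlid T c k a) {L : Finset ℕ}
    (hleg : SlidLegal (fringeSet T k) L) {q : ℕ} (hL : L ⊆ Icc 1 q) (hq : q + c ≤ k) :
    ∑ ℓ ∈ L, a ℓ ≤ q := by
  rcases X.eq_empty_or_singleton hleg hL hq with rfl | ⟨i, rfl⟩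
  · simp
  · have := mem_Icc.1 (hL (mem_singleton_self i))
    rw [sum_singleton, X.apply_eq_self this.1 (by omega)]
    exact this.2

/-- Below `k + 2c + 2` a legal set is a single index or a pair `p < q` with `p ≤ 3c + 1` and
`k - c ≤ q - p ≤ k + 2c`. -/
theorem mem_sums_of_slidDecomp (X : FringeSlid T c k a) {q x : ℕ} (hq : q ≤ k + 2 * c + 1)
    (hD : SlidDecomp (fringeSet T k) a q x) (hx : 0 < x) :
    x ∈ (Icc 1 q).image a ∪
      (Icc 1 (3 * c + 1) ×ˢ Icc (k - c) (k + 2 * c)).image fun p => a p.1 + a (p.1 + p.2) := by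
  obtain ⟨L, hL, hleg, rfl⟩ := hD
  have hne : L.Nonempty := nonempty_of_sum_ne_zero hx.ne'
  obtain ⟨m, R, hm, hR, rfl, hsum⟩ := X.exists_insert_eq hleg hL hne
  have hm := mem_Icc.1 hm
  have := X.k_ge
  rcases X.eq_empty_or_singleton (hleg.subset (subset_insert m R)) hR (by omega)
    with rfl | ⟨p, rfl⟩
  · exact mem_union_left _ (mem_image.2 ⟨m, mem_Icc.2 hm, by simp⟩)
  · have hp := mem_Icc.1 (hR (mem_singleton_self p))
    refine mem_union_right _ (mem_image.2 ⟨(p, m - p), ?_, ?_⟩)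
    · simp only [mem_product, mem_Icc]
      omega
    · rw [hsum, sum_singleton, add_comm, Nat.add_sub_cancel' (by omega)]

theorem apply_le_add_sq (X : FringeSlid T c k a) {j : ℕ} (hj : 1 ≤ j)
    (hjk : j ≤ k + 2 * c + 2) : a j ≤ j + (3 * c + 1) ^ 2 := by
  have := X.slid.pos hj
  have hcover := fun x (hx : x ∈ Icc 1 (a j - 1)) =>
    X.mem_sums_of_slidDecomp (q := j - 1) (by omega)
      (X.slid.slidDecomp_of_lt hj (mem_Icc.1 hx).1 (by have := (mem_Icc.1 hx).2; omega))
      (mem_Icc.1 hx).1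
  have hck : c ≤ k := by have := X.k_ge; omega
  calc a j = (Icc 1 (a j - 1)).card + 1 := by simp; omega
    _ ≤ (Icc 1 (j - 1)).card + (Icc 1 (3 * c + 1) ×ˢ Icc (k - c) (k + 2 * c)).card + 1 := by
      grw [card_le_card hcover, card_union_le, card_image_le, card_image_le]
    _ = j + (3 * c + 1) ^ 2 := by
      simp only [card_product, Nat.card_Icc, Nat.add_sub_cancel]
      rw [show k + 2 * c + 1 - (k - c) = 3 * c + 1 by omega, sq]
      omega

theorem add_mul_le_apply (X : FringeSlid T c k a) {N : ℕ} (HR : RecurrenceBelow a k c N)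
    {j : ℕ} (hj : k + c < j) {r : ℕ} (hjr : j + r ≤ N) : a j + r * (j - k) ≤ a (j + r) := by
  induction r with
  | zero => simp
  | succ r ih =>
    rw [← add_assoc, HR (j + r) (by omega) (by omega)]
    have := X.le_apply (p := j + r - k) (by omega)
    have := ih (by omega)
    rw [Nat.succ_mul]
    omega

theorem apply_add_le (X : FringeSlid T c k a) {N : ℕ} (HR : RecurrenceBelow a k c N)
    {q : ℕ} (hq : k + c < q) {r : ℕ} (hqr : q + r ≤ N) :
    a (q + r) ≤ a q + r * a (q + r - k) := by
  induction r with
  | zero => simp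
  | succ r ih =>
    rw [← add_assoc, HR (q + r) (by omega) (by omega)]
    have := X.apply_le_apply (p := q + r - k) (q := q + r + 1 - k) (by omega) (by omega)
    have := ih (by omega)
    rw [Nat.succ_mul]
    nlinarith

theorem mul_le_apply_of_le (X : FringeSlid T c k a) {N : ℕ} (HR : RecurrenceBelow a k c N)
    {q : ℕ} (hq : 3 * c + 3 ≤ q) (hqk : q ≤ k + c + 1) (hqN : q + (k - 2 * c) ≤ N) :
    (c + 3) * a q ≤ a (q + (k - 2 * c)) := by
  have hk := X.k_ge
  obtain ⟨r, rfl⟩ : ∃ r, q = r + (3 * c + 3) := ⟨q - (3 * c + 3), by omega⟩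
  have hgrow := X.add_mul_le_apply HR (j := k + c + 3) (r := r) (by omega) (by omega)
  rw [show k + c + 3 - k = c + 3 by omega,
    show k + c + 3 + r = r + (3 * c + 3) + (k - 2 * c) by omega] at hgrow
  have hq := X.apply_le_add_sq (j := r + (3 * c + 3)) (by omega) (by omega)
  have := X.le_apply (p := k + c + 3) (by omega)
  calc (c + 3) * a (r + (3 * c + 3))
      ≤ (c + 3) * (r + (3 * c + 3) + (3 * c + 1) ^ 2) := Nat.mul_le_mul_left _ hq
    _ = r * (c + 3) + (9 * c ^ 3 + 36 * c ^ 2 + 31 * c + 12) := by ring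
    _ ≤ _ := by omega

/-- Up to `q = k + c + 1` the bound `a q ≤ q + (3c + 1)²` is beaten by the growth of `a` past
`k + c`; beyond that both sides obey the recurrence. -/
theorem mul_le_apply (X : FringeSlid T c k a) {N : ℕ} (HR : RecurrenceBelow a k c N)
    {q : ℕ} (hq : 1 ≤ q) (hqN : q + (k - 2 * c) ≤ N) :
    (c + 3) * a q ≤ a (q + (k - 2 * c)) := by
  have hk := X.k_ge
  induction q using Nat.strong_induction_on with
  | _ q IH =>
  rcases le_or_gt q (3 * c + 2) with hq3 | hq3
  · rw [X.apply_eq_self hq (by omega)]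
    have := X.le_apply (p := q + (k - 2 * c)) (by omega)
    have : (c + 3) * q ≤ (c + 3) * (3 * c + 2) := Nat.mul_le_mul_left _ hq3
    have : (c + 3) * (3 * c + 2) = 3 * c ^ 2 + 11 * c + 6 := by ring
    omega
  rcases le_or_gt q (k + c + 1) with hqk | hqk
  · exact X.mul_le_apply_of_le HR (by omega) hqk hqN
  have hp := HR (q - 1 + (k - 2 * c)) (by omega) (by omega)
  have hq' := HR (q - 1) (by omega) (by omega)
  rw [show q - 1 + (k - 2 * c) + 1 = q + (k - 2 * c) by omega,
    show q - 1 + (k - 2 * c) - k = q - 1 - k + (k - 2 * c) by omega] at hp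
  rw [Nat.sub_add_cancel hq] at hq'
  have := IH (q - 1) (by omega) (by omega) (by omega)
  have := IH (q - 1 - k) (by omega) (by omega) (by omega)
  rw [hp, hq', mul_add]
  omega

theorem two_mul_le_apply (X : FringeSlid T c k a) {N : ℕ} (HR : RecurrenceBelow a k c N)
    {q : ℕ} (hq : 1 ≤ q) (hqN : q + (k - c) ≤ N) : 2 * a q ≤ a (q + (k - c)) := by
  have hk := X.k_ge
  have h := X.mul_le_apply HR (q := q + c) (by omega) (by omega)
  rw [show q + c + (k - 2 * c) = q + (k - c) by omega] at h
  have := X.apply_le_apply hq (show q ≤ q + c by omega)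
  nlinarith

/-- Peeling off the top index `m` leaves a legal set below `m - (k - c)`, whose sum is at most
`2 a (m - (k - c)) ≤ a m` by induction. -/
theorem sum_le_two_mul (X : FringeSlid T c k a) {N : ℕ} (HR : RecurrenceBelow a k c N)
    {L : Finset ℕ} (hleg : SlidLegal (fringeSet T k) L) {j : ℕ} (hL : L ⊆ Icc 1 j)
    (hjN : j ≤ N) : ∑ ℓ ∈ L, a ℓ ≤ 2 * a j := by
  induction j using Nat.strong_induction_on generalizing L with
  | _ j IH =>
  obtain rfl | hne := L.eq_empty_or_nonempty
  · simp
  obtain ⟨m, R, hm, hR, rfl, hsum⟩ := X.exists_insert_eq hleg hL hne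
  have hm := mem_Icc.1 hm
  have hk := X.k_ge
  have hmj := X.apply_le_apply hm.1 hm.2
  rw [hsum]
  obtain rfl | ⟨x, hx⟩ := R.eq_empty_or_nonempty
  · simp
    omega
  have := mem_Icc.1 (hR hx)
  have hRle := IH (m + c - k) (by omega) (hleg.subset (subset_insert m R)) hR (by omega)
  have := X.two_mul_le_apply HR (q := m + c - k) (by omega) (by omega)
  rw [show m + c - k + (k - c) = m by omega] at this
  omega

theorem sum_add_mul_lt (X : FringeSlid T c k a) {N : ℕ} (HR : RecurrenceBelow a k c N)
    {L : Finset ℕ} (hleg : SlidLegal (fringeSet T k) L) {q : ℕ} (hq : 1 ≤ q)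
    (hL : L ⊆ Icc 1 q) (hqN : q + (k - 2 * c) ≤ N) :
    ∑ ℓ ∈ L, a ℓ + c * a q < a (q + (k - 2 * c)) := by
  have := X.sum_le_two_mul HR hleg hL (by omega)
  have := X.mul_le_apply HR hq hqN
  have := X.slid.pos hq
  nlinarith

/-- An index `x > n - k` of `R` alone exceeds `a (n - k)`, and `x = n - k` would sit at the
forbidden distance `k` from `n` (`0 ∉ T`); so `R` would be a decomposition of `a (n - k)`. -/
theorem sum_ne_of_top_eq (X : FringeSlid T c k a) {n : ℕ} {R : Finset ℕ} (hkn : k < n)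
    (hleg : SlidLegal (fringeSet T k) (insert n R)) (hR : R ⊆ Icc 1 (n + c - k)) :
    ∑ ℓ ∈ R, a ℓ ≠ a (n - k) := by
  intro hsum
  have hlow : ∀ x ∈ R, x + k < n := fun x hx => by
    rcases X.legal_insert_cases hleg hR hx with h | ⟨t, ht, h⟩
    · exact h
    · have := X.pos t ht
      have := X.apply_lt_apply (p := n - k) (q := x) (by omega) (by omega)
      have := single_le_sum (fun i _ => Nat.zero_le (a i)) hx
      omega
  refine X.slid.not_slidDecomp (n := n - k) (by omega)
    ⟨R, fun x hx => ?_, hleg.subset (subset_insert n R), hsum.symm⟩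
  have := mem_Icc.1 (hR hx)
  have := hlow x hx
  exact mem_Icc.2 ⟨by omega, by omega⟩

theorem add_sum_lt_of_top_le (X : FringeSlid T c k a) {m n : ℕ} {R : Finset ℕ} (hm : 1 ≤ m)
    (hmk : m ≤ k) (hn : k + c < n) (hleg : SlidLegal (fringeSet T k) (insert m R))
    (hR : R ⊆ Icc 1 (m + c - k)) : a m + ∑ ℓ ∈ R, a ℓ < a n + a (n - k) := by
  have hk := X.k_ge
  have := X.sum_le_of_subset_Icc (hleg.subset (subset_insert m R))
    (hR.trans (Icc_subset_Icc_right (show m + c - k ≤ c by omega))) (by omega)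
  have := X.slid.apply_add_le_apply_add (zero_notMem_fringeSet T k) hm (n - m)
  rw [Nat.add_sub_cancel' (by omega)] at this
  have := X.slid.pos (n := n - k) (by omega)
  omega

theorem add_sum_lt_of_add_le (X : FringeSlid T c k a) {N m n e : ℕ}
    (HR : RecurrenceBelow a k c N) {Lo : Finset ℕ} (hkm : k < m) (hmN : m - k ≤ N)
    (he : 1 ≤ e) (hem : e + k ≤ m + c) (hen : e + k ≤ n) (hleg : SlidLegal (fringeSet T k) Lo)
    (hLo : Lo ⊆ Icc 1 (e + c - k)) : a e + ∑ ℓ ∈ Lo, a ℓ < a (n - k) + a (m - k) := by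
  have hk := X.k_ge
  have := X.apply_le_apply (q := n - k) he (by omega)
  obtain rfl | ⟨y, hy⟩ := Lo.eq_empty_or_nonempty
  · have := X.slid.pos (n := m - k) (by omega)
    simp only [sum_empty]
    omega
  have := mem_Icc.1 (hLo hy)
  have := X.sum_add_mul_lt HR hleg (q := m + 2 * c - 2 * k) (by omega)
    (hLo.trans (Icc_subset_Icc_right (by omega))) (by omega)
  rw [show m + 2 * c - 2 * k + (k - 2 * c) = m - k by omega] at this
  omega

theorem add_sum_lt_of_linear (X : FringeSlid T c k a) {m n e : ℕ} {Lo : Finset ℕ}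
    (hn : k + c < n) (hkm : k < m) (he : 1 ≤ e) (hem : e + k ≤ m + c) (hek : e + c ≤ k)
    (hLo : Lo ⊆ Icc 1 (e + c - k)) : a e + ∑ ℓ ∈ Lo, a ℓ < a (n - k) + a (m - k) := by
  obtain rfl : Lo = ∅ := subset_empty.1 (by simpa [show e + c - k = 0 by omega] using hLo)
  rw [sum_empty, X.apply_eq_self he (by omega)]
  have := X.le_apply (p := n - k) (by omega)
  have := X.le_apply (p := m - k) (by omega)
  omega

theorem add_sum_lt_of_initial (X : FringeSlid T c k a) {m n e : ℕ} {Lo : Finset ℕ}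
    (hmn : m < n) (hn : n ≤ 2 * k + c) (hke : k < e + c) (hem : e + k ≤ m + c)
    (hleg : SlidLegal (fringeSet T k) Lo) (hLo : Lo ⊆ Icc 1 (e + c - k)) :
    a e + ∑ ℓ ∈ Lo, a ℓ < a (n - k) + a (m - k) := by
  have hk := X.k_ge
  have := X.apply_le_add_sq (j := e) (by omega) (by omega)
  have := X.sum_le_of_subset_Icc hleg (hLo.trans (Icc_subset_Icc_right
    (show e + c - k ≤ 3 * c by omega))) (by omega)
  have := X.le_apply (p := n - k) (by omega)
  have := X.le_apply (p := m - k) (by omega)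
  have : (3 * c + 1) ^ 2 = 9 * c ^ 2 + 6 * c + 1 := by ring
  omega

theorem add_sum_lt_of_far (X : FringeSlid T c k a) {m n e : ℕ}
    (HR : RecurrenceBelow a k c n) {Lo : Finset ℕ} (hmn : m < n) (hn : 2 * k + c < n)
    (hne : n < e + k) (hem : e + k ≤ m + c) (hleg : SlidLegal (fringeSet T k) Lo)
    (hLo : Lo ⊆ Icc 1 (e + c - k)) : a e + ∑ ℓ ∈ Lo, a ℓ < a (n - k) + a (m - k) := by
  have hk := X.k_ge
  have hstep := X.apply_add_le HR (q := n - k) (r := e - (n - k)) (by omega) (by omega)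
  rw [Nat.add_sub_cancel' (by omega)] at hstep
  have htail := X.sum_add_mul_lt HR hleg (q := m + 2 * c - 2 * k) (by omega)
    (hLo.trans (Icc_subset_Icc_right (by omega))) (by omega)
  rw [show m + 2 * c - 2 * k + (k - 2 * c) = m - k by omega] at htail
  have : (e - (n - k)) * a (e - k) ≤ c * a (m + 2 * c - 2 * k) :=
    Nat.mul_le_mul (by omega) (X.apply_le_apply (by omega) (by omega))
  omega

theorem sum_lt_of_top_gt (X : FringeSlid T c k a) {m n : ℕ} (HR : RecurrenceBelow a k c n)
    {R : Finset ℕ} (hn : k + c < n) (hkm : k < m) (hmn : m < n)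
    (hleg : SlidLegal (fringeSet T k) (insert m R)) (hR : R ⊆ Icc 1 (m + c - k)) :
    ∑ ℓ ∈ R, a ℓ < a (n - k) + a (m - k) := by
  obtain rfl | hne := R.eq_empty_or_nonempty
  · have := X.slid.pos (n := m - k) (by omega)
    simp only [sum_empty]
    omega
  have hlegR := hleg.subset (subset_insert m R)
  obtain ⟨e, Lo, he, hLo, rfl, hsum⟩ := X.exists_insert_eq hlegR hR hne
  have hlegLo := hlegR.subset (subset_insert e Lo)
  have he := mem_Icc.1 he
  rw [hsum]
  rcases le_or_gt (e + k) n with hen | hen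
  · exact X.add_sum_lt_of_add_le HR hkm (by omega) he.1 (by omega) hen hlegLo hLo
  rcases le_or_gt (e + c) k with hek | hek
  · exact X.add_sum_lt_of_linear hn hkm he.1 (by omega) hek hLo
  rcases le_or_gt n (2 * k + c) with h2k | h2k
  · exact X.add_sum_lt_of_initial hmn h2k hek (by omega) hlegLo hLo
  · exact X.add_sum_lt_of_far HR hmn h2k hen (by omega) hlegLo hLo

theorem not_slidDecomp_apply_add_apply_sub (X : FringeSlid T c k a) {n : ℕ}
    (HR : RecurrenceBelow a k c n) (hn : k + c < n) :
    ¬ SlidDecomp (fringeSet T k) a n (a n + a (n - k)) := by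
  rintro ⟨L, hL, hleg, hsum⟩
  have := X.slid.pos (n := n) (by omega)
  obtain ⟨m, R, hm, hR, rfl, hsplit⟩ :=
    X.exists_insert_eq hleg hL (nonempty_of_sum_ne_zero (f := a) (by omega))
  have hm := mem_Icc.1 hm
  rw [hsplit] at hsum
  obtain hmn | rfl := hm.2.lt_or_eq
  · rcases le_or_gt m k with hmk | hkm
    · have := X.add_sum_lt_of_top_le hm.1 hmk hn hleg hR
      omega
    · have := X.sum_lt_of_top_gt HR hn hkm hmn hleg hR
      have := X.apply_add_apply_sub_le hkm hmn
      omega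
  · exact X.sum_ne_of_top_eq (by omega) hleg hR (by omega)

theorem apply_add_one (X : FringeSlid T c k a) {n : ℕ} (HR : RecurrenceBelow a k c n)
    (hn : k + c < n) : a (n + 1) = a n + a (n - k) :=
  le_antisymm
    ((X.slid (n + 1) (by omega)).2
      ⟨by have := X.slid.pos (n := n) (by omega); omega,
        X.not_slidDecomp_apply_add_apply_sub HR hn⟩)
    (X.apply_add_apply_sub_le (by omega) (lt_add_one n))

end FringeSlid

theorem slid_fixed_fringes_recurrence
    (T : Finset ℕ) (hTne : T.Nonempty) (hTpos : ∀ t ∈ T, 0 < t)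
    (c : ℕ) (hc : c = T.max' hTne) :
    ∃ K : ℕ, ∀ k, K ≤ k → ∀ a : ℕ → ℕ,
      IsSlidSeq (Set.Icc 1 k \ ((fun t => k - t) '' ↑T)) a →
      ∀ n, k + c < n → a (n + 1) = a n + a (n - k) := by
  refine ⟨100 * (c + 1) ^ 3, fun k hk a ha n => ?_⟩
  have X : FringeSlid T c k a := ⟨hTpos, fun t ht => hc ▸ T.le_max' t ht, hk, ha⟩
  induction n using Nat.strong_induction_on with
  | _ n IH => exact fun hn => X.apply_add_one (fun j hj hjn => IH j hjn hj) hn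
end
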